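/- Let θ ∈ [0,1], and let k_i > 0, h_i > 0, R_i > 0, q_i ∈ ℝ, β_i ∈ ℝ (i = 1,…,m), b_1,…,b_m ∈ ℝ^d, f ∈ ℝ^d. Consider the two problems over (u, c_e, c_p, γ) with the same feasible set {c_{e,i} + c_{p,i} = b_iᵀu, γ_i ≥ |c_{p,i}| for all i}: problem (Pκ) with objective Σ_i (q_i c_{e,i} + ½ k_i c_{e,i}²) + Σ_i [R_i γ_i + ½ θ h_i γ_i² + β_i c_{p,i} + ½ (1−θ) h_i c_{p,i}²] − fᵀu, and problem (Pκ') with objective Σ_i (q_i c_{e,i} + ½ k_i c_{e,i}²) + Σ_i (R_i γ_i + ½ h_i γ_i² + β_i c_{p,i}) − fᵀu. Then (Pκ) and (Pκ') have the same set of global optimal solutions, and their optimal values coincide. -/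
import Mathlib


open Finset

/-- Common feasible set of problems (Pκ) and (Pκ'). -/
def PkFeasible (m d : ℕ) (b : Fin m → Fin d → ℝ)
    (u : Fin d → ℝ) (ce cp γ : Fin m → ℝ) : Prop :=
  (∀ i, ce i + cp i = ∑ j, b i j * u j) ∧ (∀ i, γ i ≥ |cp i|)

/-- Objective of problem (Pκ). -/
noncomputable def PkObj (m d : ℕ) (θ : ℝ) (k h R q β : Fin m → ℝ) (f : Fin d → ℝ)
    (u : Fin d → ℝ) (ce cp γ : Fin m → ℝ) : ℝ :=
  (∑ i, (q i * ce i + (1/2) * k i * (ce i)^2))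
    + (∑ i, (R i * γ i + (1/2) * (θ * h i) * (γ i)^2
        + β i * cp i + (1/2) * ((1 - θ) * h i) * (cp i)^2))
    - ∑ j, f j * u j

/-- Objective of problem (Pκ'), obtained by the substitution `c_{p,i}² = γᵢ²`. -/
noncomputable def PkObj' (m d : ℕ) (k h R q β : Fin m → ℝ) (f : Fin d → ℝ)
    (u : Fin d → ℝ) (ce cp γ : Fin m → ℝ) : ℝ :=
  (∑ i, (q i * ce i + (1/2) * k i * (ce i)^2))
    + (∑ i, (R i * γ i + (1/2) * h i * (γ i)^2 + β i * cp i))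
    - ∑ j, f j * u j

lemma subst_eq (m d : ℕ) (θ : ℝ) (k h R q β : Fin m → ℝ) (f : Fin d → ℝ)
    (u : Fin d → ℝ) (ce cp : Fin m → ℝ) :
    PkObj m d θ k h R q β f u ce cp (fun i => |cp i|)
      = PkObj' m d k h R q β f u ce cp (fun i => |cp i|) := by
  unfold PkObj PkObj'
  congr 2
  apply Finset.sum_congr rfl
  intro i _
  simp only [sq_abs]
  ring

lemma scalar_le (c R x g : ℝ) (hc : 0 ≤ c) (hR : 0 < R) (hx : 0 ≤ x) (hxg : x ≤ g) :
    R * x + (1/2) * c * x^2 ≤ R * g + (1/2) * c * g^2 := by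
  have h3 : x^2 ≤ g^2 := by nlinarith
  nlinarith [mul_le_mul_of_nonneg_left h3 hc, mul_le_mul_of_nonneg_left hxg hR.le]

lemma scalar_lt (c R x g : ℝ) (hc : 0 ≤ c) (hR : 0 < R) (hx : 0 ≤ x) (hxg : x < g) :
    R * x + (1/2) * c * x^2 < R * g + (1/2) * c * g^2 := by
  have h3 : x^2 ≤ g^2 := by nlinarith
  nlinarith [mul_le_mul_of_nonneg_left h3 hc, mul_lt_mul_of_pos_left hxg hR]

lemma mono_P (m d : ℕ) (θ : ℝ) (hθ0 : 0 ≤ θ) (k h R q β : Fin m → ℝ) (f : Fin d → ℝ)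
    (hh : ∀ i, 0 < h i) (hR : ∀ i, 0 < R i)
    (u : Fin d → ℝ) (ce cp γ : Fin m → ℝ) (hfe : ∀ i, |cp i| ≤ γ i) :
    PkObj m d θ k h R q β f u ce cp (fun i => |cp i|)
      ≤ PkObj m d θ k h R q β f u ce cp γ := by
  unfold PkObj
  have : (∑ i, (R i * |cp i| + (1/2) * (θ * h i) * (|cp i|)^2
        + β i * cp i + (1/2) * ((1 - θ) * h i) * (cp i)^2))
      ≤ (∑ i, (R i * γ i + (1/2) * (θ * h i) * (γ i)^2
        + β i * cp i + (1/2) * ((1 - θ) * h i) * (cp i)^2)) := by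
    apply Finset.sum_le_sum
    intro i _
    have := scalar_le (θ * h i) (R i) (|cp i|) (γ i)
      (mul_nonneg hθ0 (hh i).le) (hR i) (abs_nonneg _) (hfe i)
    linarith
  linarith

lemma mono_P' (m d : ℕ) (k h R q β : Fin m → ℝ) (f : Fin d → ℝ)
    (hh : ∀ i, 0 < h i) (hR : ∀ i, 0 < R i)
    (u : Fin d → ℝ) (ce cp γ : Fin m → ℝ) (hfe : ∀ i, |cp i| ≤ γ i) :
    PkObj' m d k h R q β f u ce cp (fun i => |cp i|)
      ≤ PkObj' m d k h R q β f u ce cp γ := by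
  unfold PkObj'
  have : (∑ i, (R i * |cp i| + (1/2) * h i * (|cp i|)^2 + β i * cp i))
      ≤ (∑ i, (R i * γ i + (1/2) * h i * (γ i)^2 + β i * cp i)) := by
    apply Finset.sum_le_sum
    intro i _
    have := scalar_le (h i) (R i) (|cp i|) (γ i)
      (hh i).le (hR i) (abs_nonneg _) (hfe i)
    linarith
  linarith

lemma strict_P (m d : ℕ) (θ : ℝ) (hθ0 : 0 ≤ θ) (k h R q β : Fin m → ℝ) (f : Fin d → ℝ)
    (hh : ∀ i, 0 < h i) (hR : ∀ i, 0 < R i)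
    (u : Fin d → ℝ) (ce cp γ : Fin m → ℝ) (hfe : ∀ i, |cp i| ≤ γ i)
    (j : Fin m) (hj : |cp j| < γ j) :
    PkObj m d θ k h R q β f u ce cp (fun i => |cp i|)
      < PkObj m d θ k h R q β f u ce cp γ := by
  unfold PkObj
  have : (∑ i, (R i * |cp i| + (1/2) * (θ * h i) * (|cp i|)^2
        + β i * cp i + (1/2) * ((1 - θ) * h i) * (cp i)^2))
      < (∑ i, (R i * γ i + (1/2) * (θ * h i) * (γ i)^2
        + β i * cp i + (1/2) * ((1 - θ) * h i) * (cp i)^2)) := by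
    apply Finset.sum_lt_sum
    · intro i _
      have := scalar_le (θ * h i) (R i) (|cp i|) (γ i)
        (mul_nonneg hθ0 (hh i).le) (hR i) (abs_nonneg _) (hfe i)
      linarith
    · refine ⟨j, Finset.mem_univ j, ?_⟩
      have := scalar_lt (θ * h j) (R j) (|cp j|) (γ j)
        (mul_nonneg hθ0 (hh j).le) (hR j) (abs_nonneg _) hj
      linarith
  linarith

lemma strict_P' (m d : ℕ) (k h R q β : Fin m → ℝ) (f : Fin d → ℝ)
    (hh : ∀ i, 0 < h i) (hR : ∀ i, 0 < R i)
    (u : Fin d → ℝ) (ce cp γ : Fin m → ℝ) (hfe : ∀ i, |cp i| ≤ γ i)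
    (j : Fin m) (hj : |cp j| < γ j) :
    PkObj' m d k h R q β f u ce cp (fun i => |cp i|)
      < PkObj' m d k h R q β f u ce cp γ := by
  unfold PkObj'
  have : (∑ i, (R i * |cp i| + (1/2) * h i * (|cp i|)^2 + β i * cp i))
      < (∑ i, (R i * γ i + (1/2) * h i * (γ i)^2 + β i * cp i)) := by
    apply Finset.sum_lt_sum
    · intro i _
      have := scalar_le (h i) (R i) (|cp i|) (γ i)
        (hh i).le (hR i) (abs_nonneg _) (hfe i)
      linarith
    · refine ⟨j, Finset.mem_univ j, ?_⟩
      have := scalar_lt (h j) (R j) (|cp j|) (γ j)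
        (hh j).le (hR j) (abs_nonneg _) hj
      linarith
  linarith

lemma sInf_eq_of_mutual (A B : Set ℝ) (hA : A.Nonempty) (hB : B.Nonempty)
    (hAB : ∀ a ∈ A, ∃ b ∈ B, b ≤ a) (hBA : ∀ b ∈ B, ∃ a ∈ A, a ≤ b) :
    sInf A = sInf B := by
  have hlb : lowerBounds A = lowerBounds B := by
    ext x
    constructor
    · intro hx b hb
      obtain ⟨a, ha, hab⟩ := hBA b hb
      exact le_trans (hx ha) hab
    · intro hx a ha
      obtain ⟨b, hb, hba⟩ := hAB a ha
      exact le_trans (hx hb) hba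
  by_cases hbdd : BddBelow A
  · have hbddB : BddBelow B := by rwa [BddBelow, ← hlb]
    apply le_antisymm
    · apply le_csInf hB
      intro b hb
      obtain ⟨a, ha, hab⟩ := hBA b hb
      exact le_trans (csInf_le hbdd ha) hab
    · apply le_csInf hA
      intro a ha
      obtain ⟨b, hb, hba⟩ := hAB a ha
      exact le_trans (csInf_le hbddB hb) hba
  · have hbddB : ¬ BddBelow B := by rwa [BddBelow, ← hlb]
    rw [Real.sInf_of_not_bddBelow hbdd, Real.sInf_of_not_bddBelow hbddB]


/-- problems (Pκ) and (Pκ') have the same global optimal solutions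
and the same optimal value. -/
theorem mixed_hardening_substitution_equivalence (m d : ℕ) (θ : ℝ)
    (hθ : θ ∈ Set.Icc (0 : ℝ) 1)
    (k h R q β : Fin m → ℝ)
    (hk : ∀ i, 0 < k i) (hh : ∀ i, 0 < h i) (hR : ∀ i, 0 < R i)
    (b : Fin m → Fin d → ℝ) (f : Fin d → ℝ) :
    (∀ (u : Fin d → ℝ) (ce cp γ : Fin m → ℝ),
      (PkFeasible m d b u ce cp γ ∧
        ∀ (u' : Fin d → ℝ) (ce' cp' γ' : Fin m → ℝ),
          PkFeasible m d b u' ce' cp' γ' →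
          PkObj m d θ k h R q β f u ce cp γ
            ≤ PkObj m d θ k h R q β f u' ce' cp' γ')
      ↔ (PkFeasible m d b u ce cp γ ∧
          ∀ (u' : Fin d → ℝ) (ce' cp' γ' : Fin m → ℝ),
            PkFeasible m d b u' ce' cp' γ' →
            PkObj' m d k h R q β f u ce cp γ
              ≤ PkObj' m d k h R q β f u' ce' cp' γ'))
    ∧ sInf {y : ℝ | ∃ (u : Fin d → ℝ) (ce cp γ : Fin m → ℝ),
          PkFeasible m d b u ce cp γ ∧ PkObj m d θ k h R q β f u ce cp γ = y}
        = sInf {y : ℝ | ∃ (u : Fin d → ℝ) (ce cp γ : Fin m → ℝ),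
            PkFeasible m d b u ce cp γ ∧ PkObj' m d k h R q β f u ce cp γ = y} := by
  constructor
  · intro u ce cp γ
    constructor
    · rintro ⟨hfeas, hopt⟩
      refine ⟨hfeas, ?_⟩
      have hgam : γ = fun i => |cp i| := by
        funext j
        by_contra hne
        have hlt : |cp j| < γ j := lt_of_le_of_ne (hfeas.2 j) (Ne.symm hne)
        have hfeas2 : PkFeasible m d b u ce cp (fun i => |cp i|) :=
          ⟨hfeas.1, fun i => le_refl _⟩
        have h1 := hopt u ce cp (fun i => |cp i|) hfeas2
        have h2 := strict_P m d θ hθ.1 k h R q β f hh hR u ce cp γ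
          (fun i => hfeas.2 i) j hlt
        linarith
      intro u' ce' cp' γ' hf'
      have e1 : PkObj' m d k h R q β f u ce cp γ
          = PkObj m d θ k h R q β f u ce cp γ := by
        rw [hgam, ← subst_eq]
      rw [e1]
      have hf'' : PkFeasible m d b u' ce' cp' (fun i => |cp' i|) :=
        ⟨hf'.1, fun i => le_refl _⟩
      calc PkObj m d θ k h R q β f u ce cp γ
          ≤ PkObj m d θ k h R q β f u' ce' cp' (fun i => |cp' i|) :=
            hopt _ _ _ _ hf''
        _ = PkObj' m d k h R q β f u' ce' cp' (fun i => |cp' i|) :=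
            subst_eq m d θ k h R q β f u' ce' cp'
        _ ≤ PkObj' m d k h R q β f u' ce' cp' γ' :=
            mono_P' m d k h R q β f hh hR u' ce' cp' γ' (fun i => hf'.2 i)
    · rintro ⟨hfeas, hopt⟩
      refine ⟨hfeas, ?_⟩
      have hgam : γ = fun i => |cp i| := by
        funext j
        by_contra hne
        have hlt : |cp j| < γ j := lt_of_le_of_ne (hfeas.2 j) (Ne.symm hne)
        have hfeas2 : PkFeasible m d b u ce cp (fun i => |cp i|) :=
          ⟨hfeas.1, fun i => le_refl _⟩
        have h1 := hopt u ce cp (fun i => |cp i|) hfeas2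
        have h2 := strict_P' m d k h R q β f hh hR u ce cp γ
          (fun i => hfeas.2 i) j hlt
        linarith
      intro u' ce' cp' γ' hf'
      have e1 : PkObj m d θ k h R q β f u ce cp γ
          = PkObj' m d k h R q β f u ce cp γ := by
        rw [hgam, subst_eq]
      rw [e1]
      have hf'' : PkFeasible m d b u' ce' cp' (fun i => |cp' i|) :=
        ⟨hf'.1, fun i => le_refl _⟩
      calc PkObj' m d k h R q β f u ce cp γ
          ≤ PkObj' m d k h R q β f u' ce' cp' (fun i => |cp' i|) :=
            hopt _ _ _ _ hf''
        _ = PkObj m d θ k h R q β f u' ce' cp' (fun i => |cp' i|) :=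
            (subst_eq m d θ k h R q β f u' ce' cp').symm
        _ ≤ PkObj m d θ k h R q β f u' ce' cp' γ' :=
            mono_P m d θ hθ.1 k h R q β f hh hR u' ce' cp' γ' (fun i => hf'.2 i)
  · apply sInf_eq_of_mutual
    · exact ⟨_, ⟨0, 0, 0, 0, ⟨fun i => by simp, fun i => by simp⟩, rfl⟩⟩
    · exact ⟨_, ⟨0, 0, 0, 0, ⟨fun i => by simp, fun i => by simp⟩, rfl⟩⟩
    · rintro a ⟨u, ce, cp, γ, hfe, rfl⟩
      refine ⟨PkObj' m d k h R q β f u ce cp (fun i => |cp i|),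
        ⟨u, ce, cp, (fun i => |cp i|), ⟨hfe.1, fun i => le_refl _⟩, rfl⟩, ?_⟩
      rw [← subst_eq]
      exact mono_P m d θ hθ.1 k h R q β f hh hR u ce cp γ (fun i => hfe.2 i)
    · rintro a ⟨u, ce, cp, γ, hfe, rfl⟩
      refine ⟨PkObj m d θ k h R q β f u ce cp (fun i => |cp i|),
        ⟨u, ce, cp, (fun i => |cp i|), ⟨hfe.1, fun i => le_refl _⟩, rfl⟩, ?_⟩
      rw [subst_eq]
      exact mono_P' m d k h R q β f hh hR u ce cp γ (fun i => hfe.2 i)
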